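/- arXiv:2003.12935 — 3 statements merged into one kernel-verified Lean document; each statement's English description precedes it below -/
import Mathlib

section
/- Let A ∈ R^{κ×κ} be symmetric positive definite. Then θ_1[A] := max{θ ≥ 0 : gᵀAg ≥ θ‖g‖₁² for all g ∈ R^κ} satisfies θ_1[A] = (max_{‖x‖_∞ ≤ 1} xᵀA⁻¹x)⁻¹. -/
/-!
The ℓ₁-norm is dual to the ℓ_∞-norm: `‖g‖₁ = max_{‖x‖_∞ ≤ 1} x ⬝ᵥ g`, attained at the sign
vector of `g`. Cauchy–Schwarz for the inner product given by `A⁻¹`, applied to `x` and `A g`,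
gives `(x ⬝ᵥ g)² ≤ (xᵀA⁻¹x)(gᵀAg)`, so `‖g‖₁² ≤ m · gᵀAg` and `m⁻¹` is admissible.
Conversely, for a maximiser `x` and `g = A⁻¹x` one has `gᵀAg = m ≤ x ⬝ᵥ g ≤ ‖g‖₁`, so no
`θ > m⁻¹` is admissible.
-/

open Matrix

theorem Matrix.PosSemidef.sq_dotProduct_mulVec_le {n : Type*} [Fintype n] {M : Matrix n n ℝ}
    (hM : M.PosSemidef) (u v : n → ℝ) :
    (u ⬝ᵥ M *ᵥ v) ^ 2 ≤ (u ⬝ᵥ M *ᵥ u) * (v ⬝ᵥ M *ᵥ v) := by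
  let := M.toSeminormedAddCommGroup hM
  let := M.toInnerProductSpace hM
  have hinner (x y : n → ℝ) : inner ℝ x y = x ⬝ᵥ M *ᵥ y := by
    change (M *ᵥ y) ⬝ᵥ star x = _
    simp [dotProduct_comm]
  simpa only [hinner, sq] using real_inner_mul_inner_self_le u v

section

variable {n : Type*} [Fintype n]

theorem dotProduct_le_sum_abs_of_norm_le_one {x : n → ℝ} (hx : ‖x‖ ≤ 1) (g : n → ℝ) :
    x ⬝ᵥ g ≤ ∑ i, |g i| :=
  Finset.sum_le_sum fun i _ => calc
    x i * g i ≤ |x i| * |g i| := by rw [← abs_mul]; exact le_abs_self _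
    _ ≤ 1 * |g i| := by gcongr; exact (norm_le_pi_norm x i).trans hx
    _ = |g i| := one_mul _

theorem exists_norm_le_one_dotProduct_eq_sum_abs (g : n → ℝ) :
    ∃ x : n → ℝ, ‖x‖ ≤ 1 ∧ x ⬝ᵥ g = ∑ i, |g i| := by
  refine ⟨fun i => SignType.sign (g i), ?_, Finset.sum_congr rfl fun i _ => sign_mul_self (g i)⟩
  refine (pi_norm_le_iff_of_nonneg zero_le_one).2 fun i => ?_
  rcases lt_trichotomy (g i) 0 with h | h | h <;> simp [h]

variable [DecidableEq n] {A : Matrix n n ℝ}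

theorem Matrix.PosDef.sq_dotProduct_le (hA : A.PosDef) (x g : n → ℝ) :
    (x ⬝ᵥ g) ^ 2 ≤ (x ⬝ᵥ A⁻¹ *ᵥ x) * (g ⬝ᵥ A *ᵥ g) := by
  have hcancel : A⁻¹ *ᵥ A *ᵥ g = g := by
    rw [mulVec_mulVec, nonsing_inv_mul _ hA.det_pos.ne'.isUnit, one_mulVec]
  simpa only [hcancel, dotProduct_comm (A *ᵥ g) g]
    using hA.inv.posSemidef.sq_dotProduct_mulVec_le x (A *ᵥ g)

theorem Matrix.PosDef.sq_sum_abs_le_mul (hA : A.PosDef) {m : ℝ}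
    (hm : ∀ x : n → ℝ, ‖x‖ ≤ 1 → x ⬝ᵥ A⁻¹ *ᵥ x ≤ m) (g : n → ℝ) :
    (∑ i, |g i|) ^ 2 ≤ m * (g ⬝ᵥ A *ᵥ g) := by
  obtain ⟨x, hx, hxg⟩ := exists_norm_le_one_dotProduct_eq_sum_abs g
  rw [← hxg]
  exact (hA.sq_dotProduct_le x g).trans
    (mul_le_mul_of_nonneg_right (hm x hx) (hA.posSemidef.dotProduct_mulVec_nonneg g))

end

theorem theta_one_eq_inv_max_general {κ : ℕ}
    (A : Matrix (Fin κ) (Fin κ) ℝ) (hPD : A.PosDef)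
    (θ1 m : ℝ)
    (hθ1 : IsGreatest {θ : ℝ | 0 ≤ θ ∧ ∀ g : Fin κ → ℝ,
      θ * (∑ i, |g i|) ^ 2 ≤ g ⬝ᵥ A.mulVec g} θ1)
    (hm : IsGreatest {v : ℝ | ∃ x : Fin κ → ℝ, ‖x‖ ≤ 1 ∧ v = x ⬝ᵥ A⁻¹.mulVec x} m) :
    θ1 = m⁻¹ := by
  obtain ⟨⟨hθ1_nonneg, hθ1_le⟩, hθ1_max⟩ := hθ1
  -- For κ = 0 every θ ≥ 0 is admissible, so there is no greatest one.
  have : Nonempty (Fin κ) := by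
    by_contra hempty
    rw [not_nonempty_iff] at hempty
    have := hθ1_max (show θ1 + 1 ∈ _ from ⟨by linarith, fun g => by simp⟩)
    linarith
  have hm_pos : 0 < m := by
    have h1 : (0 : ℝ) < 1 ⬝ᵥ A⁻¹ *ᵥ 1 := by simpa using hPD.inv.dotProduct_mulVec_pos one_ne_zero
    exact h1.trans_le (hm.2 ⟨1, norm_one.le, rfl⟩)
  apply le_antisymm
  · obtain ⟨x, hx, hxm⟩ := hm.1
    set g := A⁻¹ *ᵥ x
    have hgAg : g ⬝ᵥ A *ᵥ g = m := by
      rw [mulVec_mulVec, mul_nonsing_inv _ hPD.det_pos.ne'.isUnit, one_mulVec, dotProduct_comm,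
        hxm]
    have hm_le : m ≤ ∑ i, |g i| := hxm ▸ dotProduct_le_sum_abs_of_norm_le_one hx g
    rw [← one_div, le_div_iff₀ hm_pos]
    refine le_of_mul_le_mul_right ?_ hm_pos
    calc θ1 * m * m = θ1 * m ^ 2 := by ring
      _ ≤ θ1 * (∑ i, |g i|) ^ 2 := by gcongr
      _ ≤ 1 * m := by rw [one_mul, ← hgAg]; exact hθ1_le g
  · exact hθ1_max ⟨inv_nonneg.2 hm_pos.le, fun g => by
      rw [inv_mul_le_iff₀ hm_pos]
      exact hPD.sq_sum_abs_le_mul (fun x hx => hm.2 ⟨x, hx, rfl⟩) g⟩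

/-- For symmetric positive definite A,
θ_1[A] = (max over the unit ℓ_∞ ball of xᵀA⁻¹x)⁻¹. -/
theorem theta_one_eq_inv_max {κ : ℕ}
    (A : Matrix (Fin κ) (Fin κ) ℝ) (hA : A.IsSymm) (hPD : A.PosDef)
    (θ1 m : ℝ)
    (hθ1 : IsGreatest {θ : ℝ | 0 ≤ θ ∧ ∀ g : Fin κ → ℝ,
      θ * (∑ i, |g i|) ^ 2 ≤ g ⬝ᵥ A.mulVec g} θ1)
    (hm : IsGreatest {v : ℝ | ∃ x : Fin κ → ℝ, ‖x‖ ≤ 1 ∧ v = x ⬝ᵥ A⁻¹.mulVec x} m) :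
    θ1 = m⁻¹ :=
  theta_one_eq_inv_max_general A hPD θ1 m hθ1 hm
end

section
/- Let (ζ_i)_{i≥1} be a real martingale difference sequence with |ζ_i| ≤ 1 a.s. and conditional variances σ_i² = E[ζ_i² | F_{i−1}]. Set ζ̄_N = (1/N)∑_{i=1}^N ζ_i and s̄_N = (1/N)∑_{i=1}^N σ_i². Suppose for all z > 0 and s > 0, Prob{ |∑_{i=1}^N ζ_i| ≥ √(2zs) + z/3, ∑_i σ_i² ≤ s } ≤ 2e^{−z} (Bernstein inequality for martingales). Then for 0 < s_low < s_high and y > 1, Prob{ |ζ̄_N| ≥ √(2y s̄_N / N) + y/(3N), s_low ≤ s̄_N ≤ s_high } ≤ 2e(y·ln(s_high/s_low) + 1)e^{−y}. -/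
/-!
Cut `[N s_low, N s_high]` into `J = ⌈y log (s_high / s_low)⌉` geometric pieces of ratio
`y / (y - 1)`; this many suffice because `log (y / (y - 1)) ≥ 1 / y`. If the summed conditional
variance lies in the piece `[s, s y / (y - 1)]`, the deviation event with parameter `y` implies
Bernstein's event with `z = y - 1` and variance proxy `s y / (y - 1)`, since
`(y - 1) · s y / (y - 1) = y s`. A union bound over the pieces and `e^{-(y-1)} = e · e^{-y}`
give the claim.
-/

open MeasureTheory Finset Real

lemma one_div_le_log_div_sub_one {y : ℝ} (hy : 1 < y) : 1 / y ≤ log (y / (y - 1)) := by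
  have hr : 0 < y / (y - 1) := div_pos (by linarith) (by linarith)
  have hinv : 1 - (y / (y - 1))⁻¹ = 1 / y := by field_simp; ring
  linarith [one_sub_inv_le_log_of_pos hr]

lemma le_pow_ceil_mul_log {b y : ℝ} (hb : 0 < b) (hy : 1 < y) :
    b ≤ (y / (y - 1)) ^ ⌈y * log b⌉₊ := by
  have hr : 0 < y / (y - 1) := div_pos (by linarith) (by linarith)
  rw [← log_le_log_iff hb (pow_pos hr _), log_pow]
  calc log b = y * log b * (1 / y) := by field_simp
    _ ≤ ⌈y * log b⌉₊ * (1 / y) := by gcongr; exact Nat.le_ceil _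
    _ ≤ ⌈y * log b⌉₊ * log (y / (y - 1)) := by gcongr; exact one_div_le_log_div_sub_one hy

lemma exists_lt_le_and_le_succ (f : ℕ → ℝ) {x : ℝ} (h0 : f 0 ≤ x) :
    ∀ {J : ℕ}, 0 < J → x ≤ f J → ∃ j < J, f j ≤ x ∧ x ≤ f (j + 1)
  | J + 1, _, hJ => by
    by_cases hfJ : f J ≤ x
    · exact ⟨J, J.lt_succ_self, hfJ, hJ⟩
    · have hJ0 : 0 < J := Nat.pos_of_ne_zero fun h => hfJ (h ▸ h0)
      obtain ⟨j, hj, hj'⟩ := exists_lt_le_and_le_succ f h0 hJ0 (le_of_not_ge hfJ)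
      exact ⟨j, hj.trans J.lt_succ_self, hj'⟩

lemma bernstein_threshold_mono {y s S D : ℝ} (hs : (y - 1) * s ≤ y * S)
    (hD : √(2 * y * S) + y / 3 ≤ D) : √(2 * (y - 1) * s) + (y - 1) / 3 ≤ D := by
  have : √(2 * (y - 1) * s) ≤ √(2 * y * S) := sqrt_le_sqrt (by linarith)
  linarith

lemma bernstein_threshold_mean_iff {N : ℝ} (hN : 0 < N) (y S Z : ℝ) :
    √(2 * y * ((1 / N) * S) / N) + y / (3 * N) ≤ |(1 / N) * Z| ↔
      √(2 * y * S) + y / 3 ≤ |Z| := by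
  have hsqrt : √(2 * y * ((1 / N) * S) / N) = √(2 * y * S) / N := by
    rw [show 2 * y * ((1 / N) * S) / N = 2 * y * S / N ^ 2 by ring, sqrt_div' _ (sq_nonneg N),
      sqrt_sq hN.le]
  rw [hsqrt, abs_mul, abs_of_pos (one_div_pos.2 hN), one_div_mul_eq_div,
    show y / (3 * N) = y / 3 / N by ring, ← add_div, div_le_div_iff_of_pos_right hN]

theorem measure_le_of_bernstein_peeling {Ω : Type*} {m : MeasurableSpace Ω} (μ : Measure Ω)
    (S D : Ω → ℝ) {y a p : ℝ} (hy : 1 < y) (ha : 0 < a) {J : ℕ} (hJ : 0 < J)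
    (hBernstein : ∀ s > 0, μ {ω | √(2 * (y - 1) * s) + (y - 1) / 3 ≤ D ω ∧ S ω ≤ s}
      ≤ ENNReal.ofReal p) :
    μ {ω | √(2 * y * S ω) + y / 3 ≤ D ω ∧ a ≤ S ω ∧ S ω ≤ a * (y / (y - 1)) ^ J}
      ≤ J * ENNReal.ofReal p := by
  set s : ℕ → ℝ := fun j => a * (y / (y - 1)) ^ j
  have hs_succ : ∀ j, (y - 1) * s (j + 1) = y * s j := fun j => by
    simp only [s, pow_succ]; field_simp [show y - 1 ≠ 0 by linarith]
  have hcover : {ω | √(2 * y * S ω) + y / 3 ≤ D ω ∧ a ≤ S ω ∧ S ω ≤ s J} ⊆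
      ⋃ j ∈ range J,
        {ω | √(2 * (y - 1) * s (j + 1)) + (y - 1) / 3 ≤ D ω ∧ S ω ≤ s (j + 1)} := by
    rintro ω ⟨hD, hlow, hhigh⟩
    obtain ⟨j, hj, hsj, hsj'⟩ := exists_lt_le_and_le_succ s (by simpa [s] using hlow) hJ hhigh
    refine Set.mem_biUnion (mem_range.2 hj) ⟨bernstein_threshold_mono ?_ hD, hsj'⟩
    rw [hs_succ]; gcongr
  calc _ ≤ _ := measure_mono hcover
    _ ≤ ∑ j ∈ range J, μ _ := measure_biUnion_finset_le _ _
    _ ≤ (range J).card • ENNReal.ofReal p :=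
      sum_le_card_nsmul _ _ _ fun j _ => hBernstein _ (by positivity)
    _ = J * ENNReal.ofReal p := by rw [card_range, nsmul_eq_mul]

theorem bernstein_peeling_general {Ω : Type*} {m0 : MeasurableSpace Ω}
    {μ : Measure Ω} (N : ℕ) (hN : 0 < N)
    (ζ : ℕ → Ω → ℝ) (σsq : ℕ → Ω → ℝ)
    (hBernstein : ∀ z > (0 : ℝ), ∀ s > (0 : ℝ),
      μ {ω | Real.sqrt (2 * z * s) + z / 3 ≤ |∑ i ∈ Finset.Icc 1 N, ζ i ω| ∧
             ∑ i ∈ Finset.Icc 1 N, σsq i ω ≤ s}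
        ≤ ENNReal.ofReal (2 * Real.exp (-z)))
    (slow shigh : ℝ) (hslow : 0 < slow) (hrange : slow < shigh)
    (y : ℝ) (hy : 1 < y) :
    μ {ω | Real.sqrt (2 * y * ((1 / (N : ℝ)) * ∑ i ∈ Finset.Icc 1 N, σsq i ω) / N)
            + y / (3 * N)
            ≤ |(1 / (N : ℝ)) * ∑ i ∈ Finset.Icc 1 N, ζ i ω| ∧
           slow ≤ (1 / (N : ℝ)) * ∑ i ∈ Finset.Icc 1 N, σsq i ω ∧
           (1 / (N : ℝ)) * ∑ i ∈ Finset.Icc 1 N, σsq i ω ≤ shigh}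
      ≤ ENNReal.ofReal (2 * Real.exp 1 * (y * Real.log (shigh / slow) + 1)
          * Real.exp (-y)) := by
  have hN' : (0 : ℝ) < N := Nat.cast_pos.2 hN
  have hyL : 0 < y * log (shigh / slow) :=
    mul_pos (by linarith) (log_pos ((one_lt_div hslow).2 hrange))
  set J := ⌈y * log (shigh / slow)⌉₊
  have hcover : N * shigh ≤ N * slow * (y / (y - 1)) ^ J := by
    rw [mul_assoc]; gcongr
    rw [← div_le_iff₀' hslow]
    exact le_pow_ceil_mul_log (div_pos (hslow.trans hrange) hslow) hy
  calc
    _ ≤ μ {ω | √(2 * y * ∑ i ∈ Icc 1 N, σsq i ω) + y / 3 ≤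
            |∑ i ∈ Icc 1 N, ζ i ω| ∧
          N * slow ≤ ∑ i ∈ Icc 1 N, σsq i ω ∧
          ∑ i ∈ Icc 1 N, σsq i ω ≤ N * slow * (y / (y - 1)) ^ J} := by
      refine measure_mono fun ω ⟨hdev, hlow, hhigh⟩ =>
        ⟨(bernstein_threshold_mean_iff hN' _ _ _).1 hdev, ?_, ?_⟩
      · rwa [one_div_mul_eq_div, le_div_iff₀' hN'] at hlow
      · rw [one_div_mul_eq_div, div_le_iff₀' hN'] at hhigh
        exact hhigh.trans hcover
    _ ≤ J * ENNReal.ofReal (2 * exp (-(y - 1))) :=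
      measure_le_of_bernstein_peeling μ _ _ hy (by positivity) (Nat.ceil_pos.2 hyL)
        (hBernstein (y - 1) (by linarith))
    _ ≤ _ := by
      rw [← ENNReal.ofReal_natCast, ← ENNReal.ofReal_mul (Nat.cast_nonneg _)]
      refine ENNReal.ofReal_le_ofReal ?_
      rw [show -(y - 1) = 1 + -y by ring, exp_add]
      have hJ : (J : ℝ) ≤ y * log (shigh / slow) + 1 := (Nat.ceil_lt_add_one hyL.le).le
      have he : 0 < exp 1 * exp (-y) := by positivity
      nlinarith

/-- Peeling argument: from the Bernstein inequality for martingales one obtains a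
variance-adaptive deviation bound on the range s_low ≤ s̄_N ≤ s_high. -/
theorem bernstein_peeling {Ω : Type*} {m0 : MeasurableSpace Ω}
    {μ : Measure Ω} [IsProbabilityMeasure μ]
    (ℱ : Filtration ℕ m0) (N : ℕ) (hN : 0 < N)
    (ζ : ℕ → Ω → ℝ) (σsq : ℕ → Ω → ℝ)
    (hadapted : ∀ i ∈ Finset.Icc 1 N, StronglyMeasurable[ℱ i] (ζ i))
    (hmds : ∀ i ∈ Finset.Icc 1 N, μ[ζ i | ℱ (i - 1)] =ᵐ[μ] 0)
    (hbdd : ∀ i ∈ Finset.Icc 1 N, ∀ᵐ ω ∂μ, |ζ i ω| ≤ 1)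
    (hσ : ∀ i ∈ Finset.Icc 1 N,
      σsq i =ᵐ[μ] μ[fun ω => (ζ i ω) ^ 2 | ℱ (i - 1)])
    (hBernstein : ∀ z > (0 : ℝ), ∀ s > (0 : ℝ),
      μ {ω | Real.sqrt (2 * z * s) + z / 3 ≤ |∑ i ∈ Finset.Icc 1 N, ζ i ω| ∧
             ∑ i ∈ Finset.Icc 1 N, σsq i ω ≤ s}
        ≤ ENNReal.ofReal (2 * Real.exp (-z)))
    (slow shigh : ℝ) (hslow : 0 < slow) (hrange : slow < shigh)
    (y : ℝ) (hy : 1 < y) :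
    μ {ω | Real.sqrt (2 * y * ((1 / (N : ℝ)) * ∑ i ∈ Finset.Icc 1 N, σsq i ω) / N)
            + y / (3 * N)
            ≤ |(1 / (N : ℝ)) * ∑ i ∈ Finset.Icc 1 N, ζ i ω| ∧
           slow ≤ (1 / (N : ℝ)) * ∑ i ∈ Finset.Icc 1 N, σsq i ω ∧
           (1 / (N : ℝ)) * ∑ i ∈ Finset.Icc 1 N, σsq i ω ≤ shigh}
      ≤ ENNReal.ofReal (2 * Real.exp 1 * (y * Real.log (shigh / slow) + 1)
          * Real.exp (-y)) :=
  bernstein_peeling_general (m0 := m0) N hN ζ σsq hBernstein slow shigh hslow hrange y hy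
end

section
/- Let ν, y > 0, N ≥ 1 and suppose μ ∈ [0,1] satisfies |ν − μ| ≤ √(2yμ(1−μ)/N) + y/(3N). If ν > y/(3N), then μ ≥ (N+2y)^{−1}[Nν + 2y/3 − √(2Nνy + y²/3 − (2y/N)(y/3 − νN)²)], and if ν < 1 − y/(3N), then μ ≤ (N+2y)^{−1}[Nν + 4y/3 + √(2Nνy + 5y²/3 − (2y/N)(y/3 + νN)²)]. -/
/-!
In the lower tail write `t = Nν - y/3` and `D` for the radicand of `ψ_low`. If `Nμ ≥ t`, then
`D = y² + 2yt(N - t)/N ≥ y²` and the bound is immediate. Otherwise `0 ≤ t - Nμ ≤ √(2Nyμ(1-μ))`, and squaring turns this into the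
quadratic inequality `((N + 2y)μ - (Nν + 2y/3))² ≤ D`, whose smaller root is `ψ_low`.
The upper bound is the lower bound for `1 - μ` and `1 - ν`, since the deviation bound is
invariant under this reflection.
-/

open Real

noncomputable section

def psiLow (n y ν : ℝ) : ℝ :=
  (n + 2 * y)⁻¹ * (n * ν + 2 * y / 3 - √(2 * n * ν * y + y ^ 2 / 3 - (2 * y / n) * (y / 3 - ν * n) ^ 2))

def psiHigh (n y ν : ℝ) : ℝ :=
  (n + 2 * y)⁻¹ * (n * ν + 4 * y / 3 + √(2 * n * ν * y + 5 * y ^ 2 / 3 - (2 * y / n) * (y / 3 + ν * n) ^ 2))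

end

section

variable {n y ν μ : ℝ}

lemma psiLow_disc_eq (hn : n ≠ 0) :
    2 * n * ν * y + y ^ 2 / 3 - (2 * y / n) * (y / 3 - ν * n) ^ 2
      = y ^ 2 + 2 * y * (n * ν - y / 3) * (n - (n * ν - y / 3)) / n := by
  field_simp
  ring

lemma sq_le_psiLow_disc (hn : 0 < n) (hy : 0 ≤ y)
    (h : (ν - y / (3 * n) - μ) ^ 2 ≤ 2 * y * (μ * (1 - μ)) / n) :
    ((n + 2 * y) * μ - (n * ν + 2 * y / 3)) ^ 2
      ≤ 2 * n * ν * y + y ^ 2 / 3 - (2 * y / n) * (y / 3 - ν * n) ^ 2 := by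
  have key : n * (2 * n * ν * y + y ^ 2 / 3 - (2 * y / n) * (y / 3 - ν * n) ^ 2)
      - n * ((n + 2 * y) * μ - (n * ν + 2 * y / 3)) ^ 2
      = n ^ 2 * (n + 2 * y) * (2 * y * (μ * (1 - μ)) / n - (ν - y / (3 * n) - μ) ^ 2) := by
    field_simp
    ring
  have : 0 ≤ n ^ 2 * (n + 2 * y) * (2 * y * (μ * (1 - μ)) / n - (ν - y / (3 * n) - μ) ^ 2) := by
    have : 0 < n + 2 * y := by linarith
    have : 0 ≤ 2 * y * (μ * (1 - μ)) / n - (ν - y / (3 * n) - μ) ^ 2 := by linarith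
    positivity
  nlinarith

lemma psiLow_le_of_sub_le (hn : 0 < n) (hy : 0 ≤ y) (hμ : μ ∈ Set.Icc (0 : ℝ) 1)
    (hdev : ν - μ ≤ √(2 * y * (μ * (1 - μ)) / n) + y / (3 * n)) (hν : y / (3 * n) < ν) :
    psiLow n y ν ≤ μ := by
  obtain ⟨hμ0, hμ1⟩ := hμ
  rw [psiLow, inv_mul_le_iff₀ (by linarith)]
  rcases le_or_gt (ν - y / (3 * n)) μ with hnear | hfar
  · have hscale : n * (y / (3 * n)) = y / 3 := by field_simp
    have ht : y / 3 < n * ν := by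
      rw [← hscale]
      exact mul_lt_mul_of_pos_left hν hn
    have hnμ : n * ν - y / 3 ≤ n * μ := by
      rw [← hscale, ← mul_sub]
      exact mul_le_mul_of_nonneg_left hnear hn.le
    have htn : n * ν - y / 3 ≤ n := by nlinarith
    have hdisc : y ≤ √(2 * n * ν * y + y ^ 2 / 3 - (2 * y / n) * (y / 3 - ν * n) ^ 2) := by
      refine le_sqrt_of_sq_le ?_
      rw [psiLow_disc_eq hn.ne']
      have : 0 ≤ 2 * y * (n * ν - y / 3) * (n - (n * ν - y / 3)) / n := by
        have : 0 ≤ n - (n * ν - y / 3) := by linarith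
        positivity
      linarith
    nlinarith [mul_nonneg hy hμ0]
  · have hvar : 0 ≤ 2 * y * (μ * (1 - μ)) / n := by
      have : 0 ≤ 1 - μ := by linarith
      positivity
    have hsq : (ν - y / (3 * n) - μ) ^ 2 ≤ 2 * y * (μ * (1 - μ)) / n :=
      (le_sqrt (by linarith) hvar).mp (by linarith)
    have := neg_abs_le ((n + 2 * y) * μ - (n * ν + 2 * y / 3))
    have := abs_le_sqrt (sq_le_psiLow_disc hn hy hsq)
    linarith

lemma psiHigh_eq_one_sub_psiLow (hn : n ≠ 0) (hny : n + 2 * y ≠ 0) :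
    psiHigh n y ν = 1 - psiLow n y (1 - ν) := by
  have hdisc : 2 * n * ν * y + 5 * y ^ 2 / 3 - (2 * y / n) * (y / 3 + ν * n) ^ 2
      = 2 * n * (1 - ν) * y + y ^ 2 / 3 - (2 * y / n) * (y / 3 - (1 - ν) * n) ^ 2 := by
    field_simp
    ring
  rw [psiHigh, psiLow, hdisc]
  field_simp
  ring

lemma le_psiHigh_of_sub_le (hn : 0 < n) (hy : 0 ≤ y) (hμ : μ ∈ Set.Icc (0 : ℝ) 1)
    (hdev : μ - ν ≤ √(2 * y * (μ * (1 - μ)) / n) + y / (3 * n)) (hν : ν < 1 - y / (3 * n)) :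
    μ ≤ psiHigh n y ν := by
  have hreflect : psiLow n y (1 - ν) ≤ 1 - μ := by
    refine psiLow_le_of_sub_le hn hy ⟨by linarith [hμ.2], by linarith [hμ.1]⟩ ?_ (by linarith)
    rw [show (1 - μ) * (1 - (1 - μ)) = μ * (1 - μ) by ring]
    linarith
  rw [psiHigh_eq_one_sub_psiLow hn.ne' (by linarith)]
  linarith

end

theorem confidence_bound_elimination_general
    (ν y : ℝ) (N : ℕ) (hy : 0 < y) (hN : 1 ≤ N)
    (μ : ℝ) (hμ : μ ∈ Set.Icc (0 : ℝ) 1)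
    (hdev : |ν - μ| ≤ Real.sqrt (2 * y * (μ * (1 - μ)) / N) + y / (3 * N)) :
    (y / (3 * N) < ν →
      ((N : ℝ) + 2 * y)⁻¹ * ((N : ℝ) * ν + 2 * y / 3
        - Real.sqrt (2 * N * ν * y + y ^ 2 / 3
            - (2 * y / N) * (y / 3 - ν * N) ^ 2)) ≤ μ) ∧
    (ν < 1 - y / (3 * N) →
      μ ≤ ((N : ℝ) + 2 * y)⁻¹ * ((N : ℝ) * ν + 4 * y / 3
        + Real.sqrt (2 * N * ν * y + 5 * y ^ 2 / 3
            - (2 * y / N) * (y / 3 + ν * N) ^ 2))) := by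
  have hn : (0 : ℝ) < N := by exact_mod_cast hN
  obtain ⟨hμν, hνμ⟩ := abs_le.mp hdev
  exact ⟨psiLow_le_of_sub_le hn hy.le hμ hνμ,
    le_psiHigh_of_sub_le hn hy.le hμ (by linarith)⟩

/-- Algebraic elimination: from the variance-dependent deviation bound on |ν−μ| one
gets the explicit lower/upper confidence bounds ψ_low, ψ_high for μ. -/
theorem confidence_bound_elimination
    (ν y : ℝ) (N : ℕ) (hν : 0 < ν) (hy : 0 < y) (hN : 1 ≤ N)
    (μ : ℝ) (hμ : μ ∈ Set.Icc (0 : ℝ) 1)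
    (hdev : |ν - μ| ≤ Real.sqrt (2 * y * (μ * (1 - μ)) / N) + y / (3 * N)) :
    (y / (3 * N) < ν →
      ((N : ℝ) + 2 * y)⁻¹ * ((N : ℝ) * ν + 2 * y / 3
        - Real.sqrt (2 * N * ν * y + y ^ 2 / 3
            - (2 * y / N) * (y / 3 - ν * N) ^ 2)) ≤ μ) ∧
    (ν < 1 - y / (3 * N) →
      μ ≤ ((N : ℝ) + 2 * y)⁻¹ * ((N : ℝ) * ν + 4 * y / 3
        + Real.sqrt (2 * N * ν * y + 5 * y ^ 2 / 3
            - (2 * y / N) * (y / 3 + ν * N) ^ 2))) :=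
  confidence_bound_elimination_general ν y N hy hN μ hμ hdev
end
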